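/- In the common-panel factor-model setup, suppose α₁ < α₂. Then a_{1,p}/a_{2,p} → ∞ as p → ∞ and, for every x > 0, P(Q_p ≤ a_{1,p} x) → Ψ_{α₁}(x) as p → ∞. (Corollary 1, first case.) -/

import Mathlib

open MeasureTheory ProbabilityTheory Filter

noncomputable section

/-- The Fréchet distribution function with tail index `α`. -/
def frechetCDF (α x : ℝ) : ℝ := if 0 < x then Real.exp (-x ^ (-α)) else 0

/-- The norming constant `a_p = (Σ_{i<p} σ_i^α)^{1/α}`. -/
def normConst (σ : ℕ → ℝ) (α : ℝ) (p : ℕ) : ℝ :=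
  (∑ i ∈ Finset.range p, σ i ^ α) ^ (1 / α)

/-- Maximum of the first `p₁` variables of the first group and the first `p₂`
variables of the second group. -/
def Qmax {Ω : Type*} (X₁ X₂ : ℕ → Ω → ℝ) (p₁ p₂ : ℕ) (ω : Ω) : ℝ :=
  max (⨆ i : Fin p₁, X₁ i ω) (⨆ j : Fin p₂, X₂ j ω)

/-- Codomains of the family consisting of the factor `Z` and the two noise arrays. -/
def mixCodom (d : ℕ) : Unit ⊕ ℕ ⊕ ℕ → Type
  | Sum.inl _ => Fin d → ℝ
  | Sum.inr _ => ℝ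

instance mixCodomMeasurableSpace (d : ℕ) : ∀ i, MeasurableSpace (mixCodom d i)
  | Sum.inl _ => inferInstanceAs (MeasurableSpace (Fin d → ℝ))
  | Sum.inr (Sum.inl _) => inferInstanceAs (MeasurableSpace ℝ)
  | Sum.inr (Sum.inr _) => inferInstanceAs (MeasurableSpace ℝ)

/-- The family consisting of the factor `Z` and the two noise arrays. -/
def mixFun {Ω : Type*} {d : ℕ} (Z : Ω → Fin d → ℝ) (ε₁ ε₂ : ℕ → Ω → ℝ) :
    ∀ i : Unit ⊕ ℕ ⊕ ℕ, Ω → mixCodom d i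
  | Sum.inl _ => Z
  | Sum.inr (Sum.inl i) => ε₁ i
  | Sum.inr (Sum.inr j) => ε₂ j

/-!
Conditionally on `Z = z` the noises are independent, so
`P(Q_p ≤ t | Z = z) = ∏_{i<p} F₁((t - f_i z)/σ_i) · ∏_{i<p} F₂((t - f_i z)/σ_i)`.
For `t = a_{1,p} x → ∞` and bounded `f_i z`, the tail `1 - F_j((t - f_i z)/σ_i)` is
`σ_i^{α_j} t^{-α_j} (1 + o(1))` uniformly in `i`, and all tails are uniformly small, so the
`j`-th product is asymptotic to `exp(-(a_{j,p}/t)^{α_j})`. For `j = 1` this is `exp(-x^{-α₁})`;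
for `j = 2` it tends to `1`, since `a_{1,p}/a_{2,p} ≍ p^{1/α₁ - 1/α₂} → ∞`. Dominated convergence
in `z` concludes.
-/

open Finset Real Topology
open scoped ENNReal

section NormConst

variable {σ : ℕ → ℝ} {α C₁ C₂ : ℝ}

lemma normConst_nonneg (hσ : ∀ i, 0 ≤ σ i) (p : ℕ) : 0 ≤ normConst σ α p :=
  rpow_nonneg (sum_nonneg fun i _ => rpow_nonneg (hσ i) _) _

lemma normConst_rpow (hσ : ∀ i, 0 ≤ σ i) (hα : α ≠ 0) (p : ℕ) :
    normConst σ α p ^ α = ∑ i ∈ range p, σ i ^ α := by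
  rw [normConst, ← rpow_mul (sum_nonneg fun i _ => rpow_nonneg (hσ i) _), one_div,
    inv_mul_cancel₀ hα, rpow_one]

lemma normConst_const {C : ℝ} (hC : 0 ≤ C) (hα : α ≠ 0) (p : ℕ) :
    normConst (fun _ => C) α p = C * (p : ℝ) ^ (1 / α) := by
  rw [normConst, sum_const, card_range, nsmul_eq_mul, mul_rpow (Nat.cast_nonneg p)
    (rpow_nonneg hC _), ← rpow_mul hC, mul_one_div_cancel hα, rpow_one, mul_comm]

lemma normConst_mono {τ : ℕ → ℝ} (hσ : ∀ i, 0 ≤ σ i) (hστ : ∀ i, σ i ≤ τ i) (hα : 0 < α)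
    (p : ℕ) : normConst σ α p ≤ normConst τ α p :=
  rpow_le_rpow (sum_nonneg fun i _ => rpow_nonneg (hσ i) _)
    (sum_le_sum fun i _ => rpow_le_rpow (hσ i) (hστ i) hα.le) (one_div_nonneg.2 hα.le)

lemma mul_rpow_le_normConst (hC₁ : 0 ≤ C₁) (hσ : ∀ i, C₁ ≤ σ i) (hα : 0 < α) (p : ℕ) :
    C₁ * (p : ℝ) ^ (1 / α) ≤ normConst σ α p := by
  simpa only [normConst_const hC₁ hα.ne'] using normConst_mono (fun _ => hC₁) hσ hα p

lemma normConst_le_mul_rpow (hσ : ∀ i, σ i ∈ Set.Icc 0 C₂) (hα : 0 < α) (p : ℕ) :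
    normConst σ α p ≤ C₂ * (p : ℝ) ^ (1 / α) := by
  simpa only [normConst_const ((hσ 0).1.trans (hσ 0).2) hα.ne'] using
    normConst_mono (fun i => (hσ i).1) (fun i => (hσ i).2) hα p

lemma tendsto_normConst_atTop (hC₁ : 0 < C₁) (hσ : ∀ i, C₁ ≤ σ i) (hα : 0 < α) :
    Tendsto (normConst σ α) atTop atTop :=
  tendsto_atTop_mono (mul_rpow_le_normConst hC₁.le hσ hα) <|
    ((tendsto_rpow_atTop (one_div_pos.2 hα)).comp tendsto_natCast_atTop_atTop).const_mul_atTop hC₁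

lemma normConst_pos (hC₁ : 0 < C₁) (hσ : ∀ i, C₁ ≤ σ i) (hα : 0 < α) {p : ℕ} (hp : p ≠ 0) :
    0 < normConst σ α p := by
  have : (0 : ℝ) < p := by positivity
  exact (mul_pos hC₁ (rpow_pos_of_pos this _)).trans_le (mul_rpow_le_normConst hC₁.le hσ hα p)

lemma tendsto_normConst_div_normConst_atTop {α₁ α₂ : ℝ} (hC₁ : 0 < C₁)
    (hσ : ∀ i, σ i ∈ Set.Icc C₁ C₂) (hα₁ : 0 < α₁) (hα : α₁ < α₂) :
    Tendsto (fun p => normConst σ α₁ p / normConst σ α₂ p) atTop atTop := by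
  have hC₂ : 0 < C₂ := hC₁.trans_le ((hσ 0).1.trans (hσ 0).2)
  have hσ₀ : ∀ i, σ i ∈ Set.Icc 0 C₂ := fun i => ⟨hC₁.le.trans (hσ i).1, (hσ i).2⟩
  have hexp : 0 < 1 / α₁ - 1 / α₂ := sub_pos.2 (one_div_lt_one_div_of_lt hα₁ hα)
  refine tendsto_atTop_mono' _ ?_ <|
    ((tendsto_rpow_atTop hexp).comp tendsto_natCast_atTop_atTop).const_mul_atTop (div_pos hC₁ hC₂)
  filter_upwards [eventually_ne_atTop 0] with p hp
  have hp' : (0 : ℝ) < p := by positivity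
  calc C₁ / C₂ * (p : ℝ) ^ (1 / α₁ - 1 / α₂)
      = C₁ * (p : ℝ) ^ (1 / α₁) / (C₂ * (p : ℝ) ^ (1 / α₂)) := by
        rw [rpow_sub hp', mul_div_mul_comm]
    _ ≤ normConst σ α₁ p / normConst σ α₂ p :=
        div_le_div₀ (normConst_nonneg (fun i => (hσ₀ i).1) p)
          (mul_rpow_le_normConst hC₁.le (fun i => (hσ i).1) hα₁ p)
          (normConst_pos hC₁ (fun i => (hσ i).1) (hα₁.trans hα) hp)
          (normConst_le_mul_rpow hσ₀ (hα₁.trans hα) p)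

end NormConst

section TriangularArrays

variable {u v w ρ : ℕ → ℕ → ℝ} {L : ℝ}

lemma tendsto_sum_range_of_abs_le_mul
    (hvw : ∀ ε > 0, ∀ᶠ p in atTop, ∀ i, |v p i| ≤ ε * w p i)
    (hw : Tendsto (fun p => ∑ i ∈ range p, w p i) atTop (𝓝 L)) :
    Tendsto (fun p => ∑ i ∈ range p, v p i) atTop (𝓝 0) := by
  have hlo : (fun p => ∑ i ∈ range p, v p i) =o[atTop] fun p => ∑ i ∈ range p, w p i := by
    refine Asymptotics.IsLittleO.of_bound fun ε hε => ?_
    filter_upwards [hvw ε hε] with p hp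
    calc ‖∑ i ∈ range p, v p i‖ ≤ ∑ i ∈ range p, |v p i| := abs_sum_le_sum_abs _ _
      _ ≤ ∑ i ∈ range p, ε * w p i := sum_le_sum fun i _ => hp i
      _ ≤ ε * ‖∑ i ∈ range p, w p i‖ := by
        rw [← mul_sum]; exact mul_le_mul_of_nonneg_left (le_abs_self _) hε.le
  exact (Asymptotics.isLittleO_one_iff ℝ).mp (hlo.trans_isBigO (hw.isBigO_one ℝ))

lemma tendsto_sum_range_mul_of_tendsto_one (hw : ∀ᶠ p in atTop, ∀ i, 0 ≤ w p i)
    (hρ : Tendsto (fun q : ℕ × ℕ => ρ q.1 q.2) (atTop ×ˢ ⊤) (𝓝 1))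
    (hW : Tendsto (fun p => ∑ i ∈ range p, w p i) atTop (𝓝 L)) :
    Tendsto (fun p => ∑ i ∈ range p, ρ p i * w p i) atTop (𝓝 L) := by
  have herr : Tendsto (fun p => ∑ i ∈ range p, (ρ p i - 1) * w p i) atTop (𝓝 0) := by
    refine tendsto_sum_range_of_abs_le_mul (fun ε hε => ?_) hW
    filter_upwards [hw, mem_prod_top.mp (hρ (Metric.closedBall_mem_nhds 1 hε))] with p hw hp i
    rw [abs_mul, abs_of_nonneg (hw i)]
    exact mul_le_mul_of_nonneg_right (hp i) (hw i)
  simpa [sub_mul, sum_sub_distrib] using herr.add hW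

lemma tendsto_prod_range_one_sub (hu₀ : ∀ p i, 0 ≤ u p i)
    (hu : Tendsto (fun q : ℕ × ℕ => u q.1 q.2) (atTop ×ˢ ⊤) (𝓝 0))
    (hS : Tendsto (fun p => ∑ i ∈ range p, u p i) atTop (𝓝 L)) :
    Tendsto (fun p => ∏ i ∈ range p, (1 - u p i)) atTop (𝓝 (exp (-L))) := by
  have hsmall : ∀ ε > 0, ∀ᶠ p in atTop, ∀ i, u p i ≤ ε := fun ε hε =>
    mem_prod_top.mp (hu (Iic_mem_nhds hε))
  have hlog : Tendsto (fun p => ∑ i ∈ range p, (log (1 - u p i) + u p i)) atTop (𝓝 0) := by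
    refine tendsto_sum_range_of_abs_le_mul (fun ε hε => ?_) hS
    filter_upwards [hsmall (min (1 / 2) (ε / 2)) (by positivity)] with p hp i
    have hu₁ : u p i ≤ 1 / 2 := (hp i).trans (min_le_left _ _)
    have huε : u p i ≤ ε / 2 := (hp i).trans (min_le_right _ _)
    have htaylor := abs_log_sub_add_sum_range_le (x := u p i)
      (by rw [abs_of_nonneg (hu₀ p i)]; linarith) 1
    simp only [range_one, sum_singleton, zero_add, pow_one, Nat.cast_zero, div_one,
      abs_of_nonneg (hu₀ p i)] at htaylor
    calc |log (1 - u p i) + u p i| ≤ u p i ^ 2 / (1 - u p i) := by rwa [add_comm]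
      _ ≤ 2 * u p i ^ 2 := by rw [div_le_iff₀ (by linarith)]; nlinarith [hu₀ p i]
      _ ≤ ε * u p i := by nlinarith [hu₀ p i]
  have hsum : Tendsto (fun p => ∑ i ∈ range p, log (1 - u p i)) atTop (𝓝 (-L)) := by
    simpa [sum_add_distrib] using hlog.sub hS
  refine ((continuous_exp.tendsto _).comp hsum).congr' ?_
  filter_upwards [hsmall (1 / 2) (by norm_num)] with p hp
  rw [Function.comp_apply, exp_sum]
  exact prod_congr rfl fun i _ => exp_log (by linarith [hp i])

end TriangularArrays

section Tails

variable {σ g t : ℕ → ℝ} {C₂ M : ℝ}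

lemma tendsto_sub_div_prod_top_atTop (hσ : ∀ i, σ i ∈ Set.Ioc 0 C₂) (hg : ∀ i, g i ≤ M)
    (ht : Tendsto t atTop atTop) :
    Tendsto (fun q : ℕ × ℕ => (t q.1 - g q.2) / σ q.2) (atTop ×ˢ ⊤) atTop := by
  have hC₂ : 0 < C₂ := (hσ 0).1.trans_le (hσ 0).2
  refine tendsto_atTop_mono' _ ?_ <|
    ((tendsto_atTop_add_const_right _ (-M) ht).atTop_div_const hC₂).comp tendsto_fst
  filter_upwards [tendsto_fst.eventually (ht.eventually_ge_atTop M)] with ⟨p, i⟩ hp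
  calc (t p + -M) / C₂ ≤ (t p - M) / σ i := by
        rw [← sub_eq_add_neg]; exact div_le_div_of_nonneg_left (sub_nonneg.2 hp) (hσ i).1 (hσ i).2
    _ ≤ (t p - g i) / σ i := by gcongr; exacts [(hσ i).1.le, hg i]

variable {μ : Measure ℝ} {α : ℝ}

lemma tendsto_measure_Ioi_of_tail (hα : 0 < α)
    (htail : Tendsto (fun s => s ^ α * (μ (Set.Ioi s)).toReal) atTop (𝓝 1)) :
    Tendsto (fun s => (μ (Set.Ioi s)).toReal) atTop (𝓝 0) := by
  refine (by simpa using htail.mul (tendsto_rpow_neg_atTop hα) :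
    Tendsto (fun s => s ^ α * (μ (Set.Ioi s)).toReal * s ^ (-α)) atTop (𝓝 0)).congr' ?_
  filter_upwards [eventually_gt_atTop 0] with s hs
  rw [mul_comm (s ^ α), mul_assoc, ← rpow_add hs, add_neg_cancel, rpow_zero, mul_one]

lemma tendsto_sum_measure_Ioi (hα : 0 < α)
    (htail : Tendsto (fun s => s ^ α * (μ (Set.Ioi s)).toReal) atTop (𝓝 1))
    {c : ℝ} (hσ : ∀ i, σ i ∈ Set.Ioc 0 C₂) (hg : ∀ i, |g i| ≤ M) (ht : Tendsto t atTop atTop)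
    (hc : Tendsto (fun p => normConst σ α p / t p) atTop (𝓝 c)) :
    Tendsto (fun p => ∑ i ∈ range p, (μ (Set.Ioi ((t p - g i) / σ i))).toReal) atTop
      (𝓝 (c ^ α)) := by
  set s : ℕ → ℕ → ℝ := fun p i => (t p - g i) / σ i
  have hs := tendsto_sub_div_prod_top_atTop hσ (fun i => (le_abs_self _).trans (hg i)) ht
  have hgt : Tendsto (fun q : ℕ × ℕ => g q.2 / t q.1) (atTop ×ˢ ⊤) (𝓝 0) := by
    refine squeeze_zero_norm' ?_ (((tendsto_const_nhds (x := M)).div_atTop ht).comp tendsto_fst)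
    filter_upwards [tendsto_fst.eventually (ht.eventually_gt_atTop 0)] with ⟨p, i⟩ hp
    rw [norm_div, Real.norm_of_nonneg hp.le]
    exact div_le_div_of_nonneg_right (hg i) hp.le
  -- `ρ p i` is the ratio of the `i`-th tail probability to `σ i ^ α * t p ^ (-α)`.
  set ρ : ℕ → ℕ → ℝ := fun p i =>
    s p i ^ α * (μ (Set.Ioi (s p i))).toReal * (1 - g i / t p) ^ (-α)
  have hρ : Tendsto (fun q : ℕ × ℕ => ρ q.1 q.2) (atTop ×ˢ ⊤) (𝓝 1) := by
    have h₁ : Tendsto (fun q : ℕ × ℕ => 1 - g q.2 / t q.1) (atTop ×ˢ ⊤) (𝓝 1) := by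
      simpa using tendsto_const_nhds.sub hgt
    simpa using (htail.comp hs).mul
      ((continuousAt_rpow_const 1 (-α) (Or.inl one_ne_zero)).tendsto.comp h₁)
  have hw : Tendsto (fun p => ∑ i ∈ range p, σ i ^ α * t p ^ (-α)) atTop (𝓝 (c ^ α)) := by
    refine ((continuousAt_rpow_const c α (Or.inr hα.le)).tendsto.comp hc).congr' ?_
    filter_upwards [ht.eventually_gt_atTop 0] with p hp
    rw [Function.comp_apply, div_rpow (normConst_nonneg (fun i => (hσ i).1.le) p) hp.le,
      normConst_rpow (fun i => (hσ i).1.le) hα.ne', ← sum_mul, rpow_neg hp.le, div_eq_mul_inv]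
  have hM : 0 ≤ M := (abs_nonneg _).trans (hg 0)
  have htM := ht.eventually_gt_atTop M
  refine (tendsto_sum_range_mul_of_tendsto_one ?_ hρ hw).congr' ?_
  · filter_upwards [htM] with p hp i
    exact mul_nonneg (rpow_nonneg (hσ i).1.le _) (rpow_nonneg (hM.trans hp.le) _)
  filter_upwards [htM] with p hp
  refine sum_congr rfl fun i _ => ?_
  have htp : 0 < t p := hM.trans_lt hp
  have hτ : 0 < 1 - g i / t p := by
    rw [sub_pos, div_lt_one htp]; exact (le_abs_self _).trans_lt ((hg i).trans_lt hp)
  have hs : s p i = t p / σ i * (1 - g i / t p) := by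
    simp only [s]; field_simp
  have hsp : 0 < s p i := hs ▸ mul_pos (div_pos htp (hσ i).1) hτ
  have hsα : s p i ^ (-α) = (1 - g i / t p) ^ (-α) * (σ i ^ α * t p ^ (-α)) := by
    rw [hs, mul_rpow (div_pos htp (hσ i).1).le hτ.le, div_rpow htp.le (hσ i).1.le,
      rpow_neg (hσ i).1.le, div_inv_eq_mul]
    ring
  simp only [ρ]
  rw [mul_assoc, ← hsα, mul_comm (s p i ^ α), mul_assoc, ← rpow_add hsp, add_neg_cancel,
    rpow_zero, mul_one]

end Tails

-- The distribution function at `t` of `max_{i<p} (g i + σ i * ε i)` for i.i.d. `ε i ∼ μ`, `σ > 0`.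
def shiftedMaxCDF (μ : Measure ℝ) (σ g : ℕ → ℝ) (p : ℕ) (t : ℝ) : ℝ≥0∞ :=
  ∏ i ∈ range p, μ (Set.Iic ((t - g i) / σ i))

lemma measure_Iic_eq_ofReal_one_sub (μ : Measure ℝ) [IsProbabilityMeasure μ] (s : ℝ) :
    μ (Set.Iic s) = ENNReal.ofReal (1 - (μ (Set.Ioi s)).toReal) := by
  rw [← Set.compl_Ioi, prob_compl_eq_one_sub measurableSet_Ioi,
    ENNReal.ofReal_sub _ ENNReal.toReal_nonneg, ENNReal.ofReal_one,
    ENNReal.ofReal_toReal (measure_ne_top _ _)]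

lemma tendsto_shiftedMaxCDF {μ : Measure ℝ} [IsProbabilityMeasure μ] {α : ℝ} (hα : 0 < α)
    (htail : Tendsto (fun s => s ^ α * (μ (Set.Ioi s)).toReal) atTop (𝓝 1))
    {σ g t : ℕ → ℝ} {C₂ M c : ℝ} (hσ : ∀ i, σ i ∈ Set.Ioc 0 C₂) (hg : ∀ i, |g i| ≤ M)
    (ht : Tendsto t atTop atTop) (hc : Tendsto (fun p => normConst σ α p / t p) atTop (𝓝 c)) :
    Tendsto (fun p => shiftedMaxCDF μ σ g p (t p)) atTop (𝓝 (ENNReal.ofReal (exp (-c ^ α)))) := by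
  have hu := (tendsto_measure_Ioi_of_tail hα htail).comp
    (tendsto_sub_div_prod_top_atTop hσ (fun i => (le_abs_self _).trans (hg i)) ht)
  have hprod := tendsto_prod_range_one_sub
    (u := fun p i => (μ (Set.Ioi ((t p - g i) / σ i))).toReal) (fun _ _ => ENNReal.toReal_nonneg) hu
    (tendsto_sum_measure_Ioi hα htail hσ hg ht hc)
  refine (ENNReal.tendsto_ofReal hprod).congr fun p => ?_
  rw [shiftedMaxCDF, ENNReal.ofReal_prod_of_nonneg fun i _ => sub_nonneg.2 ?_]
  · exact prod_congr rfl fun i _ => (measure_Iic_eq_ofReal_one_sub μ _).symm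
  · exact ENNReal.toReal_le_of_le_ofReal zero_le_one (by simpa using prob_le_one)

lemma shiftedMaxCDF_le_one (μ : Measure ℝ) [IsProbabilityMeasure μ] (σ g : ℕ → ℝ) (p : ℕ)
    (t : ℝ) : shiftedMaxCDF μ σ g p t ≤ 1 :=
  prod_le_one' fun _ _ => prob_le_one

lemma measurable_shiftedMaxCDF {β : Type*} [MeasurableSpace β] (μ : Measure ℝ) (σ : ℕ → ℝ)
    {f : ℕ → β → ℝ} (hf : ∀ i, Measurable (f i)) (p : ℕ) (t : ℝ) :
    Measurable fun z => shiftedMaxCDF μ σ (fun i => f i z) p t :=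
  Finset.measurable_prod _ fun i _ =>
    (Monotone.measurable fun _ _ h => measure_mono (Set.Iic_subset_Iic.2 h)).comp
      (((hf i).const_sub t).div_const _)

lemma ProbabilityTheory.IndepFun.measure_preimage_eq_lintegral {Ω α β : Type*}
    [MeasurableSpace Ω] [MeasurableSpace α] [MeasurableSpace β] {μ : Measure Ω}
    [IsProbabilityMeasure μ] {X : Ω → α} {Y : Ω → β} (hXY : IndepFun X Y μ)
    (hX : Measurable X) (hY : Measurable Y) {C : Set (α × β)} (hC : MeasurableSet C) :
    μ ((fun ω => (X ω, Y ω)) ⁻¹' C) = ∫⁻ ω, μ (Y ⁻¹' {y | (X ω, y) ∈ C}) ∂μ := by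
  rw [← Measure.map_apply (hX.prodMk hY) hC,
    (indepFun_iff_map_prod_eq_prod_map_map hX.aemeasurable hY.aemeasurable).mp hXY,
    Measure.prod_apply hC, lintegral_map (measurable_measure_prodMk_left hC) hX]
  exact lintegral_congr fun ω => Measure.map_apply hY (measurable_prodMk_left hC)

-- `NeZero` because an empty supremum of reals is `0`.
lemma Qmax_le_iff {Ω : Type*} {X₁ X₂ : ℕ → Ω → ℝ} {p₁ p₂ : ℕ} [NeZero p₁] [NeZero p₂]
    {ω : Ω} {t : ℝ} :
    Qmax X₁ X₂ p₁ p₂ ω ≤ t ↔ (∀ i : Fin p₁, X₁ i ω ≤ t) ∧ ∀ j : Fin p₂, X₂ j ω ≤ t := by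
  rw [Qmax, max_le_iff, ciSup_le_iff (Finite.bddAbove_range _),
    ciSup_le_iff (Finite.bddAbove_range _)]

section FactorModel

variable {Ω : Type*} [MeasurableSpace Ω] {P : Measure Ω} {d : ℕ} {Z : Ω → Fin d → ℝ}
  {ε₁ ε₂ : ℕ → Ω → ℝ}

lemma indepFun_factor_noise (hZ : Measurable Z) (hε₁ : ∀ i, Measurable (ε₁ i))
    (hε₂ : ∀ i, Measurable (ε₂ i))
    (hindep : iIndepFun (m := fun i => mixCodomMeasurableSpace d i) (mixFun Z ε₁ ε₂) P)
    (p : ℕ) :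
    IndepFun Z (fun ω => (fun k : Fin p => ε₁ k ω, fun k : Fin p => ε₂ k ω)) P := by
  classical
  let T : Finset (Unit ⊕ ℕ ⊕ ℕ) := ((range p).disjSum (range p)).map ⟨Sum.inr, Sum.inr_injective⟩
  have hT₁ (k : Fin p) : Sum.inr (Sum.inl k.1) ∈ T := by simp [T]
  have hT₂ (k : Fin p) : Sum.inr (Sum.inr k.1) ∈ T := by simp [T]
  have hmeas : ∀ i, Measurable (mixFun Z ε₁ ε₂ i) := by
    rintro (_ | i | i)
    exacts [hZ, hε₁ i, hε₂ i]
  have h := hindep.indepFun_finset {Sum.inl ()} T (by simp [T]) hmeas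
  let φ : (∀ i : ({Sum.inl ()} : Finset (Unit ⊕ ℕ ⊕ ℕ)), mixCodom d i) → Fin d → ℝ :=
    fun v => v ⟨Sum.inl (), mem_singleton_self _⟩
  let ψ : (∀ i : T, mixCodom d i) → (Fin p → ℝ) × (Fin p → ℝ) :=
    fun v => (fun k => v ⟨_, hT₁ k⟩, fun k => v ⟨_, hT₂ k⟩)
  have hψ : Measurable ψ := (measurable_pi_lambda _ fun k => measurable_pi_apply _).prodMk
    (measurable_pi_lambda _ fun k => measurable_pi_apply _)
  exact h.comp (measurable_pi_apply _ : Measurable φ) hψ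

lemma measure_noise_le_eq_prod
    (hid₁ : ∀ i, IdentDistrib (ε₁ i) (ε₁ 0) P P) (hid₂ : ∀ i, IdentDistrib (ε₂ i) (ε₂ 0) P P)
    (hindep : iIndepFun (m := fun i => mixCodomMeasurableSpace d i) (mixFun Z ε₁ ε₂) P)
    (p : ℕ) (b : ℕ → ℝ) :
    P {ω | ∀ k : Fin p, ε₁ k ω ≤ b k ∧ ε₂ k ω ≤ b k} =
      (∏ k ∈ range p, P.map (ε₁ 0) (Set.Iic (b k))) *
        ∏ k ∈ range p, P.map (ε₂ 0) (Set.Iic (b k)) := by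
  have hnoise := hindep.precomp (g := Sum.inr) Sum.inr_injective
  let s : ℕ ⊕ ℕ → Set Ω := Sum.elim (fun k => {ω | ε₁ k ω ≤ b k}) (fun k => {ω | ε₂ k ω ≤ b k})
  have hevent : {ω | ∀ k : Fin p, ε₁ k ω ≤ b k ∧ ε₂ k ω ≤ b k} =
      ⋂ j ∈ (range p).disjSum (range p), s j := by
    ext ω
    simp [s, Fin.forall_iff, forall_and]
  rw [hevent, hnoise.meas_biInter (s := s) ?_, prod_disjSum]
  · congr 1 <;> refine prod_congr rfl fun k _ => ?_
    · rw [Measure.map_apply_of_aemeasurable (hid₁ 0).aemeasurable_fst measurableSet_Iic]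
      exact (hid₁ k).measure_mem_eq measurableSet_Iic
    · rw [Measure.map_apply_of_aemeasurable (hid₂ 0).aemeasurable_fst measurableSet_Iic]
      exact (hid₂ k).measure_mem_eq measurableSet_Iic
  · rintro (k | k) _
    exacts [⟨_, (measurableSet_Iic : MeasurableSet (Set.Iic (b k))), rfl⟩,
      ⟨_, (measurableSet_Iic : MeasurableSet (Set.Iic (b k))), rfl⟩]

lemma measure_Qmax_le_eq_lintegral [IsProbabilityMeasure P] (hZ : Measurable Z)
    {f : ℕ → (Fin d → ℝ) → ℝ} (hf : ∀ i, Measurable (f i)) {σ : ℕ → ℝ} (hσ : ∀ i, 0 < σ i)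
    (hε₁ : ∀ i, Measurable (ε₁ i)) (hε₂ : ∀ i, Measurable (ε₂ i))
    (hid₁ : ∀ i, IdentDistrib (ε₁ i) (ε₁ 0) P P) (hid₂ : ∀ i, IdentDistrib (ε₂ i) (ε₂ 0) P P)
    (hindep : iIndepFun (m := fun i => mixCodomMeasurableSpace d i) (mixFun Z ε₁ ε₂) P)
    {X₁ X₂ : ℕ → Ω → ℝ} (hX₁ : ∀ i ω, X₁ i ω = f i (Z ω) + σ i * ε₁ i ω)
    (hX₂ : ∀ i ω, X₂ i ω = f i (Z ω) + σ i * ε₂ i ω) {p : ℕ} [NeZero p] (t : ℝ) :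
    P {ω | Qmax X₁ X₂ p p ω ≤ t} =
      ∫⁻ ω, shiftedMaxCDF (P.map (ε₁ 0)) σ (fun i => f i (Z ω)) p t *
        shiftedMaxCDF (P.map (ε₂ 0)) σ (fun i => f i (Z ω)) p t ∂P := by
  let c : ℕ → (Fin d → ℝ) → ℝ := fun k z => (t - f k z) / σ k
  let C : Set ((Fin d → ℝ) × (Fin p → ℝ) × (Fin p → ℝ)) :=
    {q | ∀ k : Fin p, q.2.1 k ≤ c k q.1 ∧ q.2.2 k ≤ c k q.1}
  have hC : MeasurableSet C := by
    simp only [C, Set.ofPred_forall, Set.ofPred_and]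
    refine .iInter fun k => .inter ?_ ?_ <;>
      exact measurableSet_le (by fun_prop) (((hf k).const_sub t).div_const _ |>.comp measurable_fst)
  have hle (i : ℕ) (x y : ℝ) : x + σ i * y ≤ t ↔ y ≤ (t - x) / σ i := by
    rw [le_div_iff₀ (hσ i)]; constructor <;> intro h <;> linarith
  have hevent : {ω | Qmax X₁ X₂ p p ω ≤ t} =
      (fun ω => (Z ω, fun k : Fin p => ε₁ k ω, fun k : Fin p => ε₂ k ω)) ⁻¹' C := by
    ext ω
    simp only [Set.mem_ofPred_eq, Set.mem_preimage, Qmax_le_iff, hX₁, hX₂, hle, C, c, forall_and]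
  rw [hevent, (indepFun_factor_noise hZ hε₁ hε₂ hindep p).measure_preimage_eq_lintegral hZ
    (by fun_prop) hC]
  exact lintegral_congr fun ω => measure_noise_le_eq_prod hid₁ hid₂ hindep p (c · (Z ω))

theorem tendsto_measure_Qmax_le [IsProbabilityMeasure P] (hZ : Measurable Z)
    {f : ℕ → (Fin d → ℝ) → ℝ} (hf : ∀ i, Measurable (f i))
    (hfbdd : ∀ᵐ ω ∂P, ∃ M : ℝ, ∀ i, |f i (Z ω)| ≤ M) {σ : ℕ → ℝ} {C₂ : ℝ}
    (hσ : ∀ i, σ i ∈ Set.Ioc 0 C₂) {α₁ α₂ : ℝ} (hα₁ : 0 < α₁) (hα₂ : 0 < α₂)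
    (hε₁ : ∀ i, Measurable (ε₁ i)) (hε₂ : ∀ i, Measurable (ε₂ i))
    (hid₁ : ∀ i, IdentDistrib (ε₁ i) (ε₁ 0) P P) (hid₂ : ∀ i, IdentDistrib (ε₂ i) (ε₂ 0) P P)
    (hindep : iIndepFun (m := fun i => mixCodomMeasurableSpace d i) (mixFun Z ε₁ ε₂) P)
    (htail₁ : Tendsto (fun x : ℝ => x ^ α₁ * (P {ω | x < ε₁ 0 ω}).toReal) atTop (𝓝 1))
    (htail₂ : Tendsto (fun x : ℝ => x ^ α₂ * (P {ω | x < ε₂ 0 ω}).toReal) atTop (𝓝 1))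
    {X₁ X₂ : ℕ → Ω → ℝ} (hX₁ : ∀ i ω, X₁ i ω = f i (Z ω) + σ i * ε₁ i ω)
    (hX₂ : ∀ i ω, X₂ i ω = f i (Z ω) + σ i * ε₂ i ω) {t : ℕ → ℝ} (ht : Tendsto t atTop atTop)
    {c₁ c₂ : ℝ} (hc₁ : Tendsto (fun p => normConst σ α₁ p / t p) atTop (𝓝 c₁))
    (hc₂ : Tendsto (fun p => normConst σ α₂ p / t p) atTop (𝓝 c₂)) :
    Tendsto (fun p => P {ω | Qmax X₁ X₂ p p ω ≤ t p}) atTop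
      (𝓝 (ENNReal.ofReal (exp (-c₁ ^ α₁) * exp (-c₂ ^ α₂)))) := by
  have : IsProbabilityMeasure (P.map (ε₁ 0)) :=
    Measure.isProbabilityMeasure_map (hε₁ 0).aemeasurable
  have : IsProbabilityMeasure (P.map (ε₂ 0)) :=
    Measure.isProbabilityMeasure_map (hε₂ 0).aemeasurable
  have hmap {ε : ℕ → Ω → ℝ} (hε : Measurable (ε 0)) {α : ℝ}
      (h : Tendsto (fun x : ℝ => x ^ α * (P {ω | x < ε 0 ω}).toReal) atTop (𝓝 1)) :
      Tendsto (fun s => s ^ α * (P.map (ε 0) (Set.Ioi s)).toReal) atTop (𝓝 1) := by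
    refine h.congr fun s => ?_
    rw [Measure.map_apply hε measurableSet_Ioi]; rfl
  have hlim : ∀ᵐ ω ∂P, Tendsto (fun p =>
      shiftedMaxCDF (P.map (ε₁ 0)) σ (fun i => f i (Z ω)) p (t p) *
        shiftedMaxCDF (P.map (ε₂ 0)) σ (fun i => f i (Z ω)) p (t p))
      atTop (𝓝 (ENNReal.ofReal (exp (-c₁ ^ α₁) * exp (-c₂ ^ α₂)))) := by
    filter_upwards [hfbdd] with ω ⟨M, hM⟩
    rw [ENNReal.ofReal_mul (exp_nonneg _)]
    exact ENNReal.Tendsto.mul (tendsto_shiftedMaxCDF hα₁ (hmap (hε₁ 0) htail₁) hσ hM ht hc₁)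
      (Or.inr ENNReal.ofReal_ne_top) (tendsto_shiftedMaxCDF hα₂ (hmap (hε₂ 0) htail₂) hσ hM ht hc₂)
      (Or.inr ENNReal.ofReal_ne_top)
  have hDCT := tendsto_lintegral_of_dominated_convergence 1
    (fun p => ((measurable_shiftedMaxCDF _ σ hf p _).mul
      (measurable_shiftedMaxCDF _ σ hf p _)).comp hZ)
    (fun p => .of_forall fun ω => mul_le_one' (shiftedMaxCDF_le_one _ _ _ _ _)
      (shiftedMaxCDF_le_one _ _ _ _ _)) (by simp) hlim
  rw [lintegral_const, measure_univ, mul_one] at hDCT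
  refine hDCT.congr' ?_
  filter_upwards [eventually_ne_atTop 0] with p hp
  have : NeZero p := ⟨hp⟩
  exact (measure_Qmax_le_eq_lintegral hZ hf (fun i => (hσ i).1) hε₁ hε₂ hid₁ hid₂ hindep
    hX₁ hX₂ _).symm

end FactorModel

theorem coro1_case1_general
    {Ω : Type*} [MeasurableSpace Ω] (P : Measure Ω) [IsProbabilityMeasure P]
    (d : ℕ) (Z : Ω → Fin d → ℝ) (hZm : Measurable Z)
    (f : ℕ → (Fin d → ℝ) → ℝ) (hfm : ∀ i, Measurable (f i))
    (hfbdd : ∀ᵐ ω ∂P, ∃ M : ℝ, ∀ i, |f i (Z ω)| ≤ M)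
    (C₁ C₂ : ℝ) (hC₁ : 0 < C₁)
    (σ : ℕ → ℝ) (hσ : ∀ i, σ i ∈ Set.Icc C₁ C₂)
    (α₁ α₂ : ℝ) (hα₁ : 0 < α₁) (hα₂ : 0 < α₂)
    (ε₁ ε₂ : ℕ → Ω → ℝ) (hε₁m : ∀ i, Measurable (ε₁ i)) (hε₂m : ∀ i, Measurable (ε₂ i))
    (hid₁ : ∀ i, IdentDistrib (ε₁ i) (ε₁ 0) P P)
    (hid₂ : ∀ i, IdentDistrib (ε₂ i) (ε₂ 0) P P)
    (hindep : iIndepFun (m := fun i => mixCodomMeasurableSpace d i) (mixFun Z ε₁ ε₂) P)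
    (htail₁ : Tendsto (fun x : ℝ => x ^ α₁ * (P {ω | x < ε₁ 0 ω}).toReal) atTop (nhds 1))
    (htail₂ : Tendsto (fun x : ℝ => x ^ α₂ * (P {ω | x < ε₂ 0 ω}).toReal) atTop (nhds 1))
    (X₁ X₂ : ℕ → Ω → ℝ)
    (hX₁ : ∀ i ω, X₁ i ω = f i (Z ω) + σ i * ε₁ i ω)
    (hX₂ : ∀ i ω, X₂ i ω = f i (Z ω) + σ i * ε₂ i ω)
    (hα : α₁ < α₂) :
    Tendsto (fun p : ℕ => normConst σ α₁ p / normConst σ α₂ p) atTop atTop ∧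
    ∀ x : ℝ, 0 < x →
      Tendsto (fun p : ℕ => (P {ω | Qmax X₁ X₂ p p ω ≤ normConst σ α₁ p * x}).toReal) atTop (nhds (frechetCDF α₁ x)) := by
  have hσ₀ : ∀ i, σ i ∈ Set.Ioc 0 C₂ := fun i => ⟨hC₁.trans_le (hσ i).1, (hσ i).2⟩
  have hratio := tendsto_normConst_div_normConst_atTop hC₁ hσ hα₁ hα
  refine ⟨hratio, fun x hx => ?_⟩
  have hc₁ : Tendsto (fun p => normConst σ α₁ p / (normConst σ α₁ p * x)) atTop (𝓝 x⁻¹) := by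
    refine tendsto_const_nhds.congr' ?_
    filter_upwards [eventually_ne_atTop 0] with p hp
    rw [div_mul_cancel_left₀ (normConst_pos hC₁ (fun i => (hσ i).1) hα₁ hp).ne']
  have hc₂ : Tendsto (fun p => normConst σ α₂ p / (normConst σ α₁ p * x)) atTop (𝓝 0) := by
    simpa [div_mul_eq_div_div, inv_div] using hratio.inv_tendsto_atTop.div_const x
  have h := tendsto_measure_Qmax_le hZm hfm hfbdd hσ₀ hα₁ hα₂ hε₁m hε₂m hid₁ hid₂ hindep htail₁
    htail₂ hX₁ hX₂ ((tendsto_normConst_atTop hC₁ (fun i => (hσ i).1) hα₁).atTop_mul_const hx)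
    hc₁ hc₂
  simpa [frechetCDF, hx, inv_rpow hx.le, rpow_neg hx.le, zero_rpow hα₂.ne', exp_nonneg,
    Function.comp_def]
    using (ENNReal.tendsto_toReal ENNReal.ofReal_ne_top).comp h

/-- Corollary 1, first case: if `α₁ < α₂` then `a_{1,p}/a_{2,p} → ∞` and `P(Q_p ≤ a_{1,p} x) → Ψ_{α₁}(x)` for every `x > 0`. -/
theorem coro1_case1
    {Ω : Type*} [MeasurableSpace Ω] (P : Measure Ω) [IsProbabilityMeasure P]
    (d : ℕ) (Z : Ω → Fin d → ℝ) (hZm : Measurable Z)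
    (f : ℕ → (Fin d → ℝ) → ℝ) (hfm : ∀ i, Measurable (f i))
    (hfbdd : ∀ᵐ ω ∂P, ∃ M : ℝ, ∀ i, |f i (Z ω)| ≤ M)
    (C₁ C₂ : ℝ) (hC₁ : 0 < C₁) (hC₁₂ : C₁ ≤ C₂)
    (σ : ℕ → ℝ) (hσ : ∀ i, σ i ∈ Set.Icc C₁ C₂)
    (α₁ α₂ : ℝ) (hα₁ : 0 < α₁) (hα₂ : 0 < α₂)
    (ε₁ ε₂ : ℕ → Ω → ℝ) (hε₁m : ∀ i, Measurable (ε₁ i)) (hε₂m : ∀ i, Measurable (ε₂ i))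
    (hid₁ : ∀ i, IdentDistrib (ε₁ i) (ε₁ 0) P P)
    (hid₂ : ∀ i, IdentDistrib (ε₂ i) (ε₂ 0) P P)
    (hindep : iIndepFun (m := fun i => mixCodomMeasurableSpace d i) (mixFun Z ε₁ ε₂) P)
    (htail₁ : Tendsto (fun x : ℝ => x ^ α₁ * (P {ω | x < ε₁ 0 ω}).toReal) atTop (nhds 1))
    (htail₂ : Tendsto (fun x : ℝ => x ^ α₂ * (P {ω | x < ε₂ 0 ω}).toReal) atTop (nhds 1))
    (X₁ X₂ : ℕ → Ω → ℝ)
    (hX₁ : ∀ i ω, X₁ i ω = f i (Z ω) + σ i * ε₁ i ω)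
    (hX₂ : ∀ i ω, X₂ i ω = f i (Z ω) + σ i * ε₂ i ω)
    (hα : α₁ < α₂) :
    Tendsto (fun p : ℕ => normConst σ α₁ p / normConst σ α₂ p) atTop atTop ∧
    ∀ x : ℝ, 0 < x →
      Tendsto (fun p : ℕ => (P {ω | Qmax X₁ X₂ p p ω ≤ normConst σ α₁ p * x}).toReal) atTop (nhds (frechetCDF α₁ x)) :=
  coro1_case1_general P d Z hZm f hfm hfbdd C₁ C₂ hC₁ σ hσ α₁ α₂ hα₁ hα₂ ε₁ ε₂ hε₁m hε₂m hid₁ hid₂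
    hindep htail₁ htail₂ X₁ X₂ hX₁ hX₂ hα
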